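/- arXiv:1207.1172 — 5 statements merged into one kernel-verified Lean document; each statement's English description precedes it below -/
import Mathlib

section
/- Let z ∈ [0,1), q ∈ [-1, 1-2√z) with q + z ≥ 0, and let y = y(q,z) = 2/(1-q+√((1-q)²-4z)). Then there exists a constant C(q,z) < 1 such that for all x ∈ [0, 1/√z): |f(x) - y| ≤ C(q,z)·|x - y|, where f(x) = (1+qx)/(1-zx). In particular one can take C(q,z) = (q+z)/(1-√z)². -/
/-!
The map `f x = (1 + q x) / (1 - z x)` is a Möbius transformation, so
`f x - f y = (q + z) (x - y) / ((1 - z x) (1 - z y))`. For `x` and the fixed point `y` both in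
`[0, 1/√z]` we have `z x, z y ≤ √z`, hence each denominator factor is at least `1 - √z`, which gives
the Lipschitz constant `(q + z) / (1 - √z)²`; it is `< 1` exactly because `q < 1 - 2√z`.
-/

open Real

lemma mobius_sub_mobius {q z x y : ℝ} (hx : 1 - z * x ≠ 0) (hy : 1 - z * y ≠ 0) :
    (1 + q * x) / (1 - z * x) - (1 + q * y) / (1 - z * y) =
      (q + z) * (x - y) / ((1 - z * x) * (1 - z * y)) := by
  rw [div_sub_div _ _ hx hy]
  congr 1
  ring

lemma mobius_eq_self_of_root {q z y : ℝ} (h : z * y ^ 2 - (1 - q) * y + 1 = 0)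
    (hy : 1 - z * y ≠ 0) : (1 + q * y) / (1 - z * y) = y := by
  rw [div_eq_iff hy]
  linear_combination h

/-- The root `2 / (p + √(p² - 4a))` of `a t² - p t + 1`, written so that it makes sense for `a = 0`. -/
lemma root_two_div_add_sqrt {a p r : ℝ} (hr : r ^ 2 = p ^ 2 - 4 * a) (h : p + r ≠ 0) :
    a * (2 / (p + r)) ^ 2 - p * (2 / (p + r)) + 1 = 0 := by
  field_simp
  linear_combination hr

lemma sqrt_mul_two_div_add_le_one {s p r : ℝ} (hs : 0 ≤ s) (hp : 2 * s < p) (hr : 0 ≤ r) :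
    s * (2 / (p + r)) ≤ 1 := by
  rw [mul_div_assoc', div_le_one (by linarith)]
  linarith

lemma one_sub_sqrt_le_one_sub_mul {z x : ℝ} (hz : 0 ≤ z) (hx : √z * x ≤ 1) :
    1 - √z ≤ 1 - z * x := by
  have : z * x = √z * (√z * x) := by rw [← mul_assoc, mul_self_sqrt hz]
  nlinarith [sqrt_nonneg z]

lemma abs_mobius_sub_mobius_le {q z x y : ℝ} (hz : 0 ≤ z) (hs1 : √z < 1) (hqz : 0 ≤ q + z)
    (hx : √z * x ≤ 1) (hy : √z * y ≤ 1) :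
    |(1 + q * x) / (1 - z * x) - (1 + q * y) / (1 - z * y)| ≤
      (q + z) / (1 - √z) ^ 2 * |x - y| := by
  have hs : 0 < 1 - √z := sub_pos.2 hs1
  have hX := one_sub_sqrt_le_one_sub_mul hz hx
  have hY := one_sub_sqrt_le_one_sub_mul hz hy
  have hXY : (1 - √z) ^ 2 ≤ (1 - z * x) * (1 - z * y) := by
    rw [sq]; exact mul_le_mul hX hY hs.le (by linarith)
  rw [mobius_sub_mobius (by linarith) (by linarith), abs_div, abs_mul, abs_of_nonneg hqz,
    abs_of_pos (hXY.trans_lt' (by positivity)), div_mul_eq_mul_div]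
  exact div_le_div_of_nonneg_left (by positivity) (by positivity) hXY

lemma add_div_one_sub_sqrt_sq_lt_one {q z : ℝ} (hz : 0 ≤ z) (hs1 : √z < 1)
    (hq : q < 1 - 2 * √z) : (q + z) / (1 - √z) ^ 2 < 1 := by
  have hs : 0 < 1 - √z := sub_pos.2 hs1
  rw [div_lt_one (by positivity), sub_sq, sq_sqrt hz]
  linarith

theorem stmt_3_general (q z : ℝ) (hz0 : 0 ≤ z) (hz1 : z < 1)
    (hq2 : q < 1 - 2 * Real.sqrt z) (hqz : 0 ≤ q + z) :
    (q + z) / (1 - Real.sqrt z) ^ 2 < 1 ∧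
    ∀ x : ℝ, 0 ≤ x → Real.sqrt z * x < 1 →
      |(1 + q * x) / (1 - z * x) - 2 / (1 - q + Real.sqrt ((1 - q) ^ 2 - 4 * z))| ≤
        (q + z) / (1 - Real.sqrt z) ^ 2 *
          |x - 2 / (1 - q + Real.sqrt ((1 - q) ^ 2 - 4 * z))| := by
  have hs := sqrt_nonneg z
  have hs1 : √z < 1 := by rw [sqrt_lt' one_pos]; linarith
  set r := √((1 - q) ^ 2 - 4 * z)
  have hr0 : 0 ≤ r := sqrt_nonneg _
  have hr : r ^ 2 = (1 - q) ^ 2 - 4 * z := sq_sqrt (by nlinarith [sq_sqrt hz0])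
  set y := 2 / (1 - q + r)
  have hy : √z * y ≤ 1 := sqrt_mul_two_div_add_le_one hs (by linarith) hr0
  have hfy : (1 + q * y) / (1 - z * y) = y :=
    mobius_eq_self_of_root (root_two_div_add_sqrt hr (by linarith))
      (by linarith [one_sub_sqrt_le_one_sub_mul hz0 hy, hs1])
  refine ⟨add_div_one_sub_sqrt_sq_lt_one hz0 hs1 hq2, fun x _ hx => ?_⟩
  have := abs_mobius_sub_mobius_le hz0 hs1 hqz hx.le hy
  rwa [hfy] at this

theorem stmt_3 (q z : ℝ) (hz0 : 0 ≤ z) (hz1 : z < 1)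
    (hq1 : -1 ≤ q) (hq2 : q < 1 - 2 * Real.sqrt z) (hqz : 0 ≤ q + z) :
    (q + z) / (1 - Real.sqrt z) ^ 2 < 1 ∧
    ∀ x : ℝ, 0 ≤ x → Real.sqrt z * x < 1 →
      |(1 + q * x) / (1 - z * x) - 2 / (1 - q + Real.sqrt ((1 - q) ^ 2 - 4 * z))| ≤
        (q + z) / (1 - Real.sqrt z) ^ 2 *
          |x - 2 / (1 - q + Real.sqrt ((1 - q) ^ 2 - 4 * z))| :=
  stmt_3_general q z hz0 hz1 hq2 hqz
end

section
/- Under the hypotheses 0 ≤ στ ≤ 1, -1 < q ≤ 1-2√(στ), with λ_n defined by λ₀ = 0, λ_{n+1} = (1+qλ_n)/(1-στλ_n), the matrices A_n = [[1-στλ_n, -σ(1+qλ_n)],[-τ(1+qλ_n), 1-στλ_n]] are nonsingular for all n ≥ 0, i.e. (1-στλ_n)² ≠ στ(1+qλ_n)². -/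
/-!
Write `t = √(στ)`, so that `A_n` is nonsingular as soon as `0 ≤ t (1 + q λ_n) < 1 - t² λ_n`.
This holds on the region `0 ≤ x`, `t x < 1`, `0 < 1 + q x`, and the region is mapped into itself by
`x ↦ (1 + q x) / (1 - t² x)`: with `s = t x`, the two inequalities behind this are the identities
`1 - t² x - t (1 + q x) = (1 - t)(1 - s) + s (1 - 2t - q)` and
`t (1 - t² x + q (1 + q x)) = (1 - s) t (1 + q) + s ((t + q)² + t (1 - 2t - q))`,
whose right-hand sides are positive because `q ≤ 1 - 2t` (and `t < 1` since `q > -1`).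
-/

def Admissible (t q x : ℝ) : Prop :=
  0 ≤ x ∧ t * x < 1 ∧ 0 < 1 + q * x

namespace Admissible

variable {t q x : ℝ}

lemma zero (t q : ℝ) : Admissible t q 0 := by
  simp [Admissible]

variable (ht : 0 ≤ t) (hq : -1 < q) (hqt : q ≤ 1 - 2 * t)
include ht hq hqt

lemma one_sub_sq_mul_pos (h : Admissible t q x) : 0 < 1 - t ^ 2 * x := by
  obtain ⟨hx, htx, -⟩ := h
  nlinarith [mul_nonneg ht hx]

lemma mul_one_add_lt (h : Admissible t q x) : t * (1 + q * x) < 1 - t ^ 2 * x := by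
  obtain ⟨hx, htx, -⟩ := h
  have hs : 0 ≤ t * x * (1 - 2 * t - q) := mul_nonneg (mul_nonneg ht hx) (by linarith)
  nlinarith [mul_pos (by linarith : (0 : ℝ) < 1 - t) (by linarith : (0 : ℝ) < 1 - t * x)]

lemma one_sub_sq_mul_add_pos (h : Admissible t q x) : 0 < 1 - t ^ 2 * x + q * (1 + q * x) := by
  obtain ⟨hx, htx, -⟩ := h
  rcases ht.eq_or_lt with rfl | htpos
  · nlinarith [mul_nonneg hx (sq_nonneg q)]
  have hQ : 0 ≤ (t + q) ^ 2 + t * (1 - 2 * t - q) :=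
    add_nonneg (sq_nonneg _) (mul_nonneg ht (by linarith))
  have key : t * (1 - t ^ 2 * x + q * (1 + q * x)) =
      (1 - t * x) * (t * (1 + q)) + t * x * ((t + q) ^ 2 + t * (1 - 2 * t - q)) := by
    ring
  have hpos : 0 < t * (1 - t ^ 2 * x + q * (1 + q * x)) := by
    rw [key]
    exact add_pos_of_pos_of_nonneg (mul_pos (by linarith) (mul_pos htpos (by linarith)))
      (mul_nonneg (mul_nonneg ht hx) hQ)
  exact pos_of_mul_pos_right hpos ht

lemma step (h : Admissible t q x) : Admissible t q ((1 + q * x) / (1 - t ^ 2 * x)) := by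
  have hu := h.one_sub_sq_mul_pos ht hq hqt
  refine ⟨div_nonneg h.2.2.le hu.le, ?_, ?_⟩
  · rw [← mul_div_assoc, div_lt_one hu]
    exact h.mul_one_add_lt ht hq hqt
  · rw [mul_div_assoc', one_add_div hu.ne']
    exact div_pos (h.one_sub_sq_mul_add_pos ht hq hqt) hu

lemma sq_mul_sq_lt (h : Admissible t q x) : t ^ 2 * (1 + q * x) ^ 2 < (1 - t ^ 2 * x) ^ 2 := by
  rw [← mul_pow]
  exact pow_lt_pow_left₀ (h.mul_one_add_lt ht hq hqt) (mul_nonneg ht h.2.2.le) two_ne_zero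

end Admissible

theorem stmt_6_general (σ τ q : ℝ) (h1 : 0 ≤ σ * τ)
    (hq1 : -1 < q) (hq2 : q ≤ 1 - 2 * Real.sqrt (σ * τ))
    (l : ℕ → ℝ) (h0 : l 0 = 0)
    (hrec : ∀ n : ℕ, l (n + 1) = (1 + q * l n) / (1 - σ * τ * l n)) :
    ∀ n : ℕ,
      Matrix.det !![1 - σ * τ * l n, -σ * (1 + q * l n);
                    -τ * (1 + q * l n), 1 - σ * τ * l n] ≠ 0 ∧
      (1 - σ * τ * l n) ^ 2 ≠ σ * τ * (1 + q * l n) ^ 2 := by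
  set t := Real.sqrt (σ * τ)
  have ht : 0 ≤ t := Real.sqrt_nonneg _
  have hst : σ * τ = t ^ 2 := (Real.sq_sqrt h1).symm
  have hadm : ∀ n, Admissible t q (l n) := by
    intro n
    induction n with
    | zero => exact h0 ▸ Admissible.zero t q
    | succ n ih =>
      rw [hrec n, hst]
      exact ih.step ht hq1 hq2
  intro n
  have hlt : σ * τ * (1 + q * l n) ^ 2 < (1 - σ * τ * l n) ^ 2 := by
    rw [hst]
    exact (hadm n).sq_mul_sq_lt ht hq1 hq2
  refine ⟨fun hdet => hlt.ne' ?_, hlt.ne'⟩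
  rw [Matrix.det_fin_two_of] at hdet
  linear_combination hdet

theorem stmt_6 (σ τ q : ℝ) (h1 : 0 ≤ σ * τ) (h2 : σ * τ ≤ 1)
    (hq1 : -1 < q) (hq2 : q ≤ 1 - 2 * Real.sqrt (σ * τ))
    (l : ℕ → ℝ) (h0 : l 0 = 0)
    (hrec : ∀ n : ℕ, l (n + 1) = (1 + q * l n) / (1 - σ * τ * l n)) :
    ∀ n : ℕ,
      Matrix.det !![1 - σ * τ * l n, -σ * (1 + q * l n);
                    -τ * (1 + q * l n), 1 - σ * τ * l n] ≠ 0 ∧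
      (1 - σ * τ * l n) ^ 2 ≠ σ * τ * (1 + q * l n) ^ 2 :=
  stmt_6_general σ τ q h1 hq1 hq2 l h0 hrec
end

section
/- Let z = στ with 0 ≤ z < 1 and -1 < q < 1-2√z, and let λ_n satisfy λ₀ = 0, λ_{n+1} = (1+qλ_n)/(1-zλ_n). Then (q + z - z(1-λ_{n-1})²)/(1 - z(2λ_n + qλ_n²)) converges as n → ∞ to D(q,z) = 4(q+z)/(1+q+√((1-q)²-4z))², and this can be rewritten as D(q,z) = (1+q-√((1-q)²-4z))/(1+q+√((1-q)²-4z)). Moreover |D(q,z)| < 1. -/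
/-!
Write `s = √((1 - q)² - 4z)`, `a = (1 + q + s)/2`, `b = (1 + q - s)/2`, so that `q = a + b - 1`,
`z = (1 - a)(1 - b)` and `|b| < a`. In these coordinates the Möbius recursion is solved by
`λₙ = (aⁿ - bⁿ) / ((1 - b)aⁿ + (a - 1)bⁿ)`, hence `λₙ → 1/(1 - b)` as `(b/a)ⁿ → 0`. At that fixed
point the numerator and denominator of the ratio are `b(a - b)/(1 - b)` and `a(a - b)/(1 - b)`,
so the limit is `b/a`, which is both closed forms of `D(q, z)` and lies in `(-1, 1)`.
-/

open Filter Topology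

lemma four_mul_lt_sq_of_two_mul_sqrt_lt {z c : ℝ} (h : 2 * √z < c) : 4 * z < c ^ 2 := by
  rcases le_or_gt 0 z with hz | hz
  · nlinarith [Real.sq_sqrt hz, Real.sqrt_nonneg z]
  · nlinarith [Real.sqrt_nonneg z]

section RootPair

variable {a b q z : ℝ}

lemma closedForm_denom_pos (hab : |b| < a) (hsum : a + b < 2) (n : ℕ) :
    0 < (1 - b) * a ^ n + (a - 1) * b ^ n := by
  have hpow : |b| ^ n ≤ a ^ n := pow_le_pow_left₀ (abs_nonneg b) hab.le n
  have hterm : -(|a - 1| * a ^ n) ≤ (a - 1) * b ^ n := by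
    refine neg_le_of_abs_le ?_
    rw [abs_mul, abs_pow]
    exact mul_le_mul_of_nonneg_left hpow (abs_nonneg _)
  have hcoef : |a - 1| < 1 - b :=
    abs_sub_lt_iff.2 ⟨by linarith, by linarith [le_abs_self b]⟩
  nlinarith [pow_pos (lt_of_le_of_lt (abs_nonneg b) hab) n]

lemma eq_closedForm_of_rec (hq : a + b = 1 + q) (hz : (1 - a) * (1 - b) = z)
    (hden : ∀ n : ℕ, (1 - b) * a ^ n + (a - 1) * b ^ n ≠ 0) {l : ℕ → ℝ} (h0 : l 0 = 0)
    (hrec : ∀ n : ℕ, l (n + 1) = (1 + q * l n) / (1 - z * l n)) (n : ℕ) :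
    l n = (a ^ n - b ^ n) / ((1 - b) * a ^ n + (a - 1) * b ^ n) := by
  induction n with
  | zero => simp [h0]
  | succ n ih =>
    rw [hrec, ih, mul_div_assoc', mul_div_assoc', one_add_div (hden n), one_sub_div (hden n),
      div_div_div_cancel_right₀ (hden n)]
    obtain rfl : q = a + b - 1 := by linarith
    subst hz
    congr 1 <;> ring

lemma tendsto_closedForm (hab : |b| < a) (hb : b ≠ 1) :
    Tendsto (fun n : ℕ => (a ^ n - b ^ n) / ((1 - b) * a ^ n + (a - 1) * b ^ n)) atTop
      (𝓝 (1 - b)⁻¹) := by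
  have ha : 0 < a := (abs_nonneg b).trans_lt hab
  have hratio : Tendsto (fun n : ℕ => (b / a) ^ n) atTop (𝓝 0) := by
    refine tendsto_pow_atTop_nhds_zero_of_abs_lt_one ?_
    rwa [abs_div, abs_of_pos ha, div_lt_one ha]
  have hlim : Tendsto (fun n : ℕ => (1 - (b / a) ^ n) / ((1 - b) + (a - 1) * (b / a) ^ n)) atTop
      (𝓝 ((1 - 0) / ((1 - b) + (a - 1) * 0))) :=
    (tendsto_const_nhds.sub hratio).div (tendsto_const_nhds.add (hratio.const_mul _))
      (by simpa [sub_eq_zero] using hb.symm)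
  rw [show (1 - 0) / ((1 - b) + (a - 1) * 0) = (1 - b)⁻¹ by ring] at hlim
  refine hlim.congr fun n => ?_
  have han : a ^ n ≠ 0 := pow_ne_zero n ha.ne'
  rw [div_pow]
  field_simp

lemma num_at_fixedPoint (hq : a + b = 1 + q) (hz : (1 - a) * (1 - b) = z) (hb : b ≠ 1) :
    q + z - z * (1 - (1 - b)⁻¹) ^ 2 = b * (a - b) / (1 - b) := by
  obtain rfl : q = a + b - 1 := by linarith
  subst hz
  have : 1 - b ≠ 0 := sub_ne_zero.2 hb.symm
  field_simp
  ring

lemma den_at_fixedPoint (hq : a + b = 1 + q) (hz : (1 - a) * (1 - b) = z) (hb : b ≠ 1) :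
    1 - z * (2 * (1 - b)⁻¹ + q * (1 - b)⁻¹ ^ 2) = a * (a - b) / (1 - b) := by
  obtain rfl : q = a + b - 1 := by linarith
  subst hz
  have : 1 - b ≠ 0 := sub_ne_zero.2 hb.symm
  field_simp
  ring

end RootPair

lemma tendsto_ratio_of_tendsto {l : ℕ → ℝ} {y q z : ℝ} (hl : Tendsto l atTop (𝓝 y))
    (hy : 1 - z * (2 * y + q * y ^ 2) ≠ 0) :
    Tendsto (fun n : ℕ => (q + z - z * (1 - l n) ^ 2) /
        (1 - z * (2 * l (n + 1) + q * l (n + 1) ^ 2))) atTop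
      (𝓝 ((q + z - z * (1 - y) ^ 2) / (1 - z * (2 * y + q * y ^ 2)))) := by
  have hl' := hl.comp (tendsto_add_atTop_nat 1)
  refine Tendsto.div ?_ ?_ hy
  · exact tendsto_const_nhds.sub (((tendsto_const_nhds.sub hl).pow 2).const_mul z)
  · exact tendsto_const_nhds.sub (((hl'.const_mul 2).add ((hl'.pow 2).const_mul q)).const_mul z)

theorem stmt_8_general (z q : ℝ)
    (hq1 : -1 < q) (hq2 : q < 1 - 2 * Real.sqrt z)
    (l : ℕ → ℝ) (h0 : l 0 = 0)
    (hrec : ∀ n : ℕ, l (n + 1) = (1 + q * l n) / (1 - z * l n)) :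
    Filter.Tendsto
      (fun n : ℕ =>
        (q + z - z * (1 - l n) ^ 2) /
          (1 - z * (2 * l (n + 1) + q * (l (n + 1)) ^ 2)))
      Filter.atTop
      (nhds (4 * (q + z) / (1 + q + Real.sqrt ((1 - q) ^ 2 - 4 * z)) ^ 2)) ∧
    4 * (q + z) / (1 + q + Real.sqrt ((1 - q) ^ 2 - 4 * z)) ^ 2 =
      (1 + q - Real.sqrt ((1 - q) ^ 2 - 4 * z)) /
        (1 + q + Real.sqrt ((1 - q) ^ 2 - 4 * z)) ∧
    |4 * (q + z) / (1 + q + Real.sqrt ((1 - q) ^ 2 - 4 * z)) ^ 2| < 1 := by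
  have hdisc : 0 < (1 - q) ^ 2 - 4 * z :=
    sub_pos.2 (four_mul_lt_sq_of_two_mul_sqrt_lt (by linarith))
  set s := √((1 - q) ^ 2 - 4 * z)
  have hs : 0 < s := Real.sqrt_pos.2 hdisc
  have hs2 : s ^ 2 = (1 - q) ^ 2 - 4 * z := Real.sq_sqrt hdisc.le
  obtain ⟨a, ha⟩ : ∃ a, 1 + q + s = 2 * a := ⟨(1 + q + s) / 2, by ring⟩
  obtain ⟨b, hb⟩ : ∃ b, 1 + q - s = 2 * b := ⟨(1 + q - s) / 2, by ring⟩
  have hq : a + b = 1 + q := by linarith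
  have hz : (1 - a) * (1 - b) = z := by nlinarith
  have hab : |b| < a := abs_lt.2 ⟨by linarith, by linarith⟩
  have hsum : a + b < 2 := by linarith [Real.sqrt_nonneg z]
  have ha0 : 0 < a := (abs_nonneg b).trans_lt hab
  have hb1 : b ≠ 1 := by linarith
  have hlim : Tendsto l atTop (𝓝 (1 - b)⁻¹) :=
    (tendsto_closedForm hab hb1).congr fun n => (eq_closedForm_of_rec hq hz
      (fun n => (closedForm_denom_pos hab hsum n).ne') h0 hrec n).symm
  have hD : 4 * (q + z) / (1 + q + s) ^ 2 = b / a := by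
    rw [ha, show q + z = a * b by linear_combination -hz - hq]
    field_simp
    ring
  refine ⟨?_, by rw [hD, ha, hb]; field_simp, ?_⟩
  · have hab' : a - b ≠ 0 := by linarith
    have hden : 1 - z * (2 * (1 - b)⁻¹ + q * (1 - b)⁻¹ ^ 2) ≠ 0 := by
      rw [den_at_fixedPoint hq hz hb1]
      exact div_ne_zero (mul_ne_zero ha0.ne' hab') (sub_ne_zero.2 hb1.symm)
    convert tendsto_ratio_of_tendsto hlim hden using 2
    rw [hD, num_at_fixedPoint hq hz hb1, den_at_fixedPoint hq hz hb1]
    field_simp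
  · rwa [hD, abs_div, abs_of_pos ha0, div_lt_one ha0]

theorem stmt_8 (z q : ℝ) (hz0 : 0 ≤ z) (hz1 : z < 1)
    (hq1 : -1 < q) (hq2 : q < 1 - 2 * Real.sqrt z)
    (l : ℕ → ℝ) (h0 : l 0 = 0)
    (hrec : ∀ n : ℕ, l (n + 1) = (1 + q * l n) / (1 - z * l n)) :
    Filter.Tendsto
      (fun n : ℕ =>
        (q + z - z * (1 - l n) ^ 2) /
          (1 - z * (2 * l (n + 1) + q * (l (n + 1)) ^ 2)))
      Filter.atTop
      (nhds (4 * (q + z) / (1 + q + Real.sqrt ((1 - q) ^ 2 - 4 * z)) ^ 2)) ∧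
    4 * (q + z) / (1 + q + Real.sqrt ((1 - q) ^ 2 - 4 * z)) ^ 2 =
      (1 + q - Real.sqrt ((1 - q) ^ 2 - 4 * z)) /
        (1 + q + Real.sqrt ((1 - q) ^ 2 - 4 * z)) ∧
    |4 * (q + z) / (1 + q + Real.sqrt ((1 - q) ^ 2 - 4 * z)) ^ 2| < 1 :=
  stmt_8_general z q hq1 hq2 l h0 hrec
end

section
/- Suppose the real sequences {α_n}, {β_n} satisfy τα_n α_{n+1} + qα_n β_{n+1} + σβ_n β_{n+1} = α_{n+1}β_n for all n ≥ 0, with α₀ = 0, β₀ = 1, and suppose λ_n (given by λ₀ = 0, λ_{n+1} = (1+qλ_n)/(1-στλ_n)) satisfies λ_n ≠ 0 for all n ≥ 1 and 1-στλ_n ≠ 0. If additionally β_n ≠ 0 forces the recursion to be solvable, then for all n ≥ 0: α_n = σλ_n β_n and β_n ≠ 0. -/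
/-! Induction on `n`: substituting `α n = σ λ_n β n` into the recursion and cancelling `β n ≠ 0`
gives `α (n+1) (1 - στλ_n) = σ (1 + qλ_n) β (n+1)`. Hence `β (n+1) = 0` would force
`α (n+1) = 0`, which is excluded, and dividing by `1 - στλ_n` yields `α (n+1) = σ λ_{n+1} β (n+1)`. -/

theorem mul_one_sub_eq_of_recurrence {σ τ q l a b a' b' : ℝ} (hb : b ≠ 0) (ha : a = σ * l * b)
    (h : τ * a * a' + q * a * b' + σ * b * b' = a' * b) :
    a' * (1 - σ * τ * l) = σ * (1 + q * l) * b' := by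
  subst ha
  apply mul_left_cancel₀ hb
  linear_combination -h

theorem recurrence_step {σ τ q l a b a' b' : ℝ} (hb : b ≠ 0) (ha : a = σ * l * b)
    (hd : 1 - σ * τ * l ≠ 0) (hnz : ¬(a' = 0 ∧ b' = 0))
    (h : τ * a * a' + q * a * b' + σ * b * b' = a' * b) :
    a' = σ * ((1 + q * l) / (1 - σ * τ * l)) * b' ∧ b' ≠ 0 := by
  have key := mul_one_sub_eq_of_recurrence hb ha h
  have hb' : b' ≠ 0 := by
    rintro rfl
    exact hnz ⟨by simpa [hd] using key, rfl⟩
  refine ⟨?_, hb'⟩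
  rw [mul_div_assoc', div_mul_eq_mul_div, eq_div_iff hd]
  linear_combination key

theorem stmt_10_general (σ τ q : ℝ) (l α β : ℕ → ℝ)
    (hl0 : l 0 = 0)
    (hldef : ∀ n : ℕ, 1 - σ * τ * l n ≠ 0)
    (hlrec : ∀ n : ℕ, l (n + 1) = (1 + q * l n) / (1 - σ * τ * l n))
    (hα0 : α 0 = 0) (hβ0 : β 0 = 1)
    (hnz : ∀ n : ℕ, ¬(α n = 0 ∧ β n = 0))
    (heq : ∀ n : ℕ,
      τ * α n * α (n + 1) + q * α n * β (n + 1) + σ * β n * β (n + 1) =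
        α (n + 1) * β n) :
    ∀ n : ℕ, α n = σ * l n * β n ∧ β n ≠ 0 := by
  intro n
  induction n with
  | zero => simp [hα0, hβ0, hl0]
  | succ n ih =>
    rw [hlrec n]
    exact recurrence_step ih.2 ih.1 (hldef n) (hnz (n + 1)) (heq n)

theorem stmt_10 (σ τ q : ℝ) (l α β : ℕ → ℝ)
    (hl0 : l 0 = 0)
    (hldef : ∀ n : ℕ, 1 - σ * τ * l n ≠ 0)
    (hlrec : ∀ n : ℕ, l (n + 1) = (1 + q * l n) / (1 - σ * τ * l n))
    (hlne : ∀ n : ℕ, 1 ≤ n → l n ≠ 0)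
    (hα0 : α 0 = 0) (hβ0 : β 0 = 1)
    (hnz : ∀ n : ℕ, ¬(α n = 0 ∧ β n = 0))
    (heq : ∀ n : ℕ,
      τ * α n * α (n + 1) + q * α n * β (n + 1) + σ * β n * β (n + 1) =
        α (n + 1) * β n) :
    ∀ n : ℕ, α n = σ * l n * β n ∧ β n ≠ 0 :=
  stmt_10_general σ τ q l α β hl0 hldef hlrec hα0 hβ0 hnz heq
end

section
/- Suppose q = 1 - 2√(στ) with στ ∈ [0,1). Then the sequence λ₀ = 0, λ_{n+1} = (1+qλ_n)/(1-στλ_n) has the closed form λ_n = n/(1+(n-1)√(στ)) for all n ≥ 0. -/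
/- With `p = √(στ)` the map `x ↦ (1 + (1 - 2p) x) / (1 - p² x)` sends `n / (1 + (n - 1) p)` to
`(n + 1) / (1 + n p)`: numerator and denominator both pick up the common factor `1 - p`.
For `0 ≤ p < 1` all the denominators `1 + (n - 1) p` are positive, so induction on `n` applies. -/

theorem moebius_recurrence_closed_form {K : Type*} [Field K] {p : K}
    (hd : ∀ k : ℕ, 1 + ((k : K) - 1) * p ≠ 0) {l : ℕ → K} (hl0 : l 0 = 0)
    (hrec : ∀ n : ℕ, l (n + 1) = (1 + (1 - 2 * p) * l n) / (1 - p ^ 2 * l n)) :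
    ∀ n : ℕ, l n = n / (1 + ((n : K) - 1) * p) := by
  intro n
  induction n with
  | zero => simp [hl0]
  | succ n ih =>
    have h1p : 1 - p ≠ 0 := by simpa [sub_eq_add_neg, add_comm] using hd 0
    have hdn := hd n
    have hdn1 : 1 + (n : K) * p ≠ 0 := by simpa using hd (n + 1)
    have hnum : 1 + (1 - 2 * p) * l n = (1 - p) * (n + 1) / (1 + ((n : K) - 1) * p) := by
      rw [ih, mul_div_assoc', one_add_div hdn]; ring
    have hden : 1 - p ^ 2 * l n = (1 - p) * (1 + n * p) / (1 + ((n : K) - 1) * p) := by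
      rw [ih, mul_div_assoc', one_sub_div hdn]; ring
    rw [hrec, hnum, hden, div_div_div_cancel_right₀ hdn, mul_div_mul_left _ _ h1p]
    push_cast
    ring

theorem one_add_sub_one_mul_pos {K : Type*} [CommRing K] [LinearOrder K] [IsStrictOrderedRing K]
    {p : K} (hp0 : 0 ≤ p) (hp1 : p < 1) (k : ℕ) : 0 < 1 + ((k : K) - 1) * p := by
  rcases k.eq_zero_or_pos with rfl | hk
  · rw [Nat.cast_zero]; linarith
  · have : (1 : K) ≤ k := by exact_mod_cast hk
    nlinarith

theorem stmt_17 (σ τ : ℝ) (h0 : 0 ≤ σ * τ) (h1 : σ * τ < 1)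
    (q : ℝ) (hq : q = 1 - 2 * Real.sqrt (σ * τ))
    (l : ℕ → ℝ) (hl0 : l 0 = 0)
    (hrec : ∀ n : ℕ, l (n + 1) = (1 + q * l n) / (1 - σ * τ * l n)) :
    ∀ n : ℕ, l n = (n : ℝ) / (1 + ((n : ℝ) - 1) * Real.sqrt (σ * τ)) := by
  have hp2 : Real.sqrt (σ * τ) ^ 2 = σ * τ := Real.sq_sqrt h0
  have hp1 : Real.sqrt (σ * τ) < 1 := by
    rwa [Real.sqrt_lt' one_pos, one_pow]
  refine moebius_recurrence_closed_form
    (fun k => (one_add_sub_one_mul_pos (Real.sqrt_nonneg _) hp1 k).ne') hl0 fun n => ?_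
  rw [hrec, hq, hp2]
end
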